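/- arXiv:2401.07341 — 3 statements merged into one kernel-verified Lean document; each statement's English description precedes it below -/
import Mathlib

section
/- If Σ_{i=1}^p m_i(b) ≥ ℓ ≥ 0 where ℓ = q − k, then one can choose, for each red component i, a blue forest F_i inside V_i with Σ_i |F_i| = ℓ and |F_i| ≤ m_i(b); extending each F_i by red edges to a spanning tree of V_i and joining the components by p−1 blue edges yields a spanning tree of G with exactly k red edges. -/
open SimpleGraph

/-- `T` is a spanning tree of `G`: a subgraph (as a graph on the same vertex set)
that is connected and acyclic. -/
def IsSpanningTree {V : Type*} (G T : SimpleGraph V) : Prop :=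
  T ≤ G ∧ T.IsTree


/-- The maximum number of edges of a forest consisting of edges from `B`
with both endpoints in `S`. -/
noncomputable def maxForestIn {V : Type*} (B : Set (Sym2 V)) (S : Set V) : ℕ :=
  sSup {n | ∃ F : Set (Sym2 V), F ⊆ B ∧ (∀ e ∈ F, ∀ v ∈ e, v ∈ S) ∧
    (SimpleGraph.fromEdgeSet F).IsAcyclic ∧ F.ncard = n}




section Helpers
variable {V : Type*}

lemma myIsAcyclic_anti {G H : SimpleGraph V} (h : H ≤ G) (hG : G.IsAcyclic) : H.IsAcyclic :=
  fun _ c hc => hG (c.mapLe h) ((SimpleGraph.Walk.mapLe_isCycle h).2 hc)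

lemma myIsAcyclic_sup_edge {T : SimpleGraph V} (hT : T.IsAcyclic) {u v : V} (hne : u ≠ v)
    (hr : ¬T.Reachable u v) : (T ⊔ edge u v).IsAcyclic := by
  intro a c hc
  by_cases he : s(u, v) ∈ c.edges
  · have hb : ¬(T ⊔ edge u v).IsBridge s(u, v) := by
      rw [isBridge_iff_adj_and_forall_cycle_notMem]
      push_neg
      exact ⟨a, c, hc, he⟩
      exact c.edges_subset_edgeSet he
    rw [isBridge_iff] at hb
    push_neg at hb
    have hadj : (T ⊔ edge u v).Adj u v := by
      refine Or.inr ?_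
      rw [edge_adj]
      exact ⟨Or.inl ⟨rfl, rfl⟩, hne⟩
    have hre := hb
    have hle : (T ⊔ edge u v) \ fromEdgeSet {s(u, v)} ≤ T := by
      intro x y hxy
      obtain ⟨h1, h2⟩ := hxy
      rcases h1 with h1 | h1
      · exact h1
      · exact absurd h1 h2
    exact hr (hre.mono hle)
  · have hsub : ∀ e ∈ c.edges, e ∈ T.edgeSet := by
      intro e hec
      have h1 := c.edges_subset_edgeSet hec
      rw [edgeSet_sup, edge_edgeSet_of_ne hne] at h1
      rcases h1 with h1 | h1
      · exact h1
      · rw [Set.mem_singleton_iff] at h1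
        exact absurd (h1 ▸ hec) he
    exact hT (c.transfer T hsub) (hc.transfer hsub)

lemma myexists_maximal_acyclic [Fintype V] {H G : SimpleGraph V} (hHG : H ≤ G)
    (hH : H.IsAcyclic) :
    ∃ T, H ≤ T ∧ T ≤ G ∧ T.IsAcyclic ∧ ∀ u v, G.Reachable u v → T.Reachable u v := by
  classical
  let S : Set ℕ := {n | ∃ T : SimpleGraph V, (H ≤ T ∧ T ≤ G ∧ T.IsAcyclic) ∧ T.edgeSet.ncard = n}
  have hne : S.Nonempty := ⟨H.edgeSet.ncard, H, ⟨le_rfl, hHG, hH⟩, rfl⟩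
  have hbdd : BddAbove S := by
    refine ⟨(Set.univ : Set (Sym2 V)).ncard, ?_⟩
    rintro n ⟨T, -, rfl⟩
    exact Set.ncard_le_ncard (Set.subset_univ _) Set.finite_univ
  obtain ⟨T, ⟨hHT, hTG, hTa⟩, hcard⟩ := Nat.sSup_mem hne hbdd
  refine ⟨T, hHT, hTG, hTa, ?_⟩
  have hadj : ∀ u v, G.Adj u v → T.Reachable u v := by
    intro u v huv
    by_contra hnr
    have hne' : u ≠ v := huv.ne
    have hacyc := myIsAcyclic_sup_edge hTa hne' hnr
    have hle : T ⊔ edge u v ≤ G := by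
      refine sup_le hTG ?_
      intro x y hxy
      rw [edge_adj] at hxy
      rcases hxy.1 with ⟨rfl, rfl⟩ | ⟨rfl, rfl⟩
      · exact huv
      · exact huv.symm
    have hm : (T ⊔ edge u v).edgeSet.ncard ∈ S :=
      ⟨T ⊔ edge u v, ⟨le_trans hHT le_sup_left, hle, hacyc⟩, rfl⟩
    have hle2 : (T ⊔ edge u v).edgeSet.ncard ≤ sSup S := le_csSup hbdd hm
    have hlt : T.edgeSet.ncard < (T ⊔ edge u v).edgeSet.ncard := by
      rw [edgeSet_sup, edge_edgeSet_of_ne hne']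
      have hnotmem : s(u, v) ∉ T.edgeSet := fun h => hnr (SimpleGraph.Adj.reachable h)
      rw [Set.union_singleton, Set.ncard_insert_of_notMem hnotmem T.edgeSet.toFinite]
      omega
    omega
  rintro u v ⟨w⟩
  induction w with
  | nil => exact Reachable.refl _
  | cons h p ih => exact (hadj _ _ h).trans ih

lemma myexists_distribution {ι : Type*} (s : Finset ι) (m : ι → ℕ) :
    ∀ ℓ : ℕ, ℓ ≤ ∑ i ∈ s, m i → ∃ f : ι → ℕ, (∀ i, f i ≤ m i) ∧ ∑ i ∈ s, f i = ℓ := by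
  classical
  induction s using Finset.induction_on with
  | empty =>
    intro ℓ hℓ
    simp only [Finset.sum_empty, Nat.le_zero] at hℓ
    exact ⟨0, fun i => Nat.zero_le _, by simp [hℓ]⟩
  | @insert a s ha ih =>
    intro ℓ hℓ
    rw [Finset.sum_insert ha] at hℓ
    obtain ⟨f, hf, hsum⟩ := ih (ℓ - min (m a) ℓ) (by omega)
    refine ⟨Function.update f a (min (m a) ℓ), ?_, ?_⟩
    · intro i
      by_cases hi : i = a
      · subst hi; simp [Function.update_self]
      · simpa [Function.update_of_ne hi] using hf i
    · rw [Finset.sum_insert ha, Function.update_self]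
      have h2 : ∑ i ∈ s, Function.update f a (min (m a) ℓ) i = ∑ i ∈ s, f i :=
        Finset.sum_congr rfl fun i hi =>
          Function.update_of_ne (fun h => absurd hi (by rw [h]; exact ha)) _ _
      rw [h2, hsum]
      omega

lemma myncard_biUnion {α ι : Type*} (s : Finset ι) (A : ι → Set α) (hfin : ∀ i, (A i).Finite)
    (hdisj : ∀ i ∈ s, ∀ j ∈ s, i ≠ j → Disjoint (A i) (A j)) :
    (⋃ i ∈ s, A i).ncard = ∑ i ∈ s, (A i).ncard := by
  classical
  induction s using Finset.induction_on with
  | empty => simp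
  | @insert a s ha ih =>
    have hfin2 : (⋃ x ∈ s, A x).Finite := s.finite_toSet.biUnion fun i _ => hfin i
    have hdis : Disjoint (A a) (⋃ x ∈ s, A x) :=
      Set.disjoint_iUnion_right.2 fun i => Set.disjoint_iUnion_right.2 fun hi =>
        hdisj a (Finset.mem_insert_self a s) i (Finset.mem_insert_of_mem hi)
          (fun h => absurd hi (by rw [← h]; exact ha))
    rw [Finset.set_biUnion_insert, Finset.sum_insert ha,
      Set.ncard_union_eq hdis (hfin a) hfin2,
      ih fun i hi j hj hij => hdisj i (Finset.mem_insert_of_mem hi) j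
        (Finset.mem_insert_of_mem hj) hij]

lemma mymaxForestIn_spec [Fintype V] (B : Set (Sym2 V)) (S : Set V) :
    ∃ F : Set (Sym2 V), F ⊆ B ∧ (∀ e ∈ F, ∀ v ∈ e, v ∈ S) ∧
      (fromEdgeSet F).IsAcyclic ∧ F.ncard = maxForestIn B S := by
  classical
  have h0 : (0 : ℕ) ∈ {n | ∃ F : Set (Sym2 V), F ⊆ B ∧ (∀ e ∈ F, ∀ v ∈ e, v ∈ S) ∧
      (SimpleGraph.fromEdgeSet F).IsAcyclic ∧ F.ncard = n} :=
    ⟨∅, Set.empty_subset _, fun e he => absurd he (Set.notMem_empty e),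
      by rw [fromEdgeSet_empty]; exact isAcyclic_bot, Set.ncard_empty _⟩
  have hbdd : BddAbove {n | ∃ F : Set (Sym2 V), F ⊆ B ∧ (∀ e ∈ F, ∀ v ∈ e, v ∈ S) ∧
      (SimpleGraph.fromEdgeSet F).IsAcyclic ∧ F.ncard = n} := by
    refine ⟨(Set.univ : Set (Sym2 V)).ncard, ?_⟩
    rintro n ⟨F, -, -, -, rfl⟩
    exact Set.ncard_le_ncard (Set.subset_univ _) Set.finite_univ
  have := Nat.sSup_mem ⟨0, h0⟩ hbdd
  exact this

end Helpers

lemma mycard_component_tree {V : Type*} [Fintype V] (R' T1 : SimpleGraph V)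
    (hcomp : ∀ a b, T1.Adj a b → R'.connectedComponentMk a = R'.connectedComponentMk b)
    (hreach : ∀ a b, R'.Reachable a b → T1.Reachable a b)
    (hacyc : T1.IsAcyclic) (c : R'.ConnectedComponent) :
    {e ∈ T1.edgeSet | ∀ v ∈ e, v ∈ c.supp}.ncard = c.supp.ncard - 1 := by
  classical
  set s : Set V := c.supp with hs
  have hGIa : (T1.induce s).IsAcyclic := by
    intro a w hw
    exact hacyc (w.map (Embedding.induce (G := T1) s).toHom)
      ((SimpleGraph.Walk.map_isCycle_iff_of_injective
        (Embedding.induce (G := T1) s).injective).2 hw)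
  have hlift : ∀ {x y : V} (_ : T1.Walk x y) (hx : x ∈ s),
      ∃ hy : y ∈ s, Nonempty ((T1.induce s).Walk ⟨x, hx⟩ ⟨y, hy⟩) := by
    intro x y w
    induction w with
    | nil => intro hx; exact ⟨hx, ⟨SimpleGraph.Walk.nil⟩⟩
    | @cons x z y h p ih =>
      intro hx
      have hz : z ∈ s := by
        have hx' : R'.connectedComponentMk x = c := hx
        show R'.connectedComponentMk z = c
        rw [← hcomp x z h]; exact hx' 
      obtain ⟨hy, ⟨q⟩⟩ := ih hz
      exact ⟨hy, ⟨SimpleGraph.Walk.cons (by simpa using h) q⟩⟩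
  have hnonempty : Nonempty s := by
    obtain ⟨v, hv⟩ := c.exists_rep
    exact ⟨⟨v, hv⟩⟩
  have hGIc : (T1.induce s).Connected := by
    rw [connected_iff]
    refine ⟨fun a b => ?_, hnonempty⟩
    have hab : R'.Reachable a.1 b.1 := by
      have ha : R'.connectedComponentMk a.1 = c := a.2
      have hb : R'.connectedComponentMk b.1 = c := b.2
      exact ConnectedComponent.eq.mp (ha.trans hb.symm)
    obtain ⟨w⟩ := hreach _ _ hab
    obtain ⟨hy, ⟨q⟩⟩ := hlift w a.2
    exact ⟨q.copy (Subtype.ext rfl) (Subtype.ext rfl)⟩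
  have hTree : (T1.induce s).IsTree := ⟨hGIc, hGIa⟩
  letI : Fintype s := (Set.toFinite s).fintype
  letI : Fintype (T1.induce s).edgeSet := Fintype.ofFinite _
  have hcardE := hTree.card_edgeFinset
  have himg : {e ∈ T1.edgeSet | ∀ v ∈ e, v ∈ c.supp} =
      Sym2.map (Subtype.val : s → V) '' (T1.induce s).edgeSet := by
    ext e
    induction e using Sym2.ind with
    | _ x y =>
      constructor
      · rintro ⟨hxy, hmem⟩
        have hx : x ∈ s := hmem x (Sym2.mem_mk_left x y)
        have hy : y ∈ s := hmem y (Sym2.mem_mk_right x y)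
        refine ⟨s(⟨x, hx⟩, ⟨y, hy⟩), ?_, by simp⟩
        simpa [mem_edgeSet] using hxy
      · rintro ⟨e', he', heq⟩
        induction e' using Sym2.ind with
        | _ a b =>
          rw [Sym2.map_pair_eq] at heq
          rw [mem_edgeSet] at he'
          refine ⟨?_, ?_⟩
          · rw [← heq, mem_edgeSet]; exact he'
          · rw [← heq]
            intro v hv
            rcases Sym2.mem_iff.mp hv with rfl | rfl
            · exact a.2
            · exact b.2
  have h1 : ((T1.induce s).edgeSet).ncard = (T1.induce s).edgeFinset.card := by
    rw [edgeFinset_card, ← Nat.card_coe_set_eq, Nat.card_eq_fintype_card]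
  have h2 : s.ncard = Fintype.card s := by
    rw [Set.ncard_eq_toFinset_card', Set.toFinset_card]
  rw [himg, Set.ncard_image_of_injective _ (Sym2.map.injective Subtype.val_injective), h1]
  omega

theorem stmt_15 {V : Type*} [Fintype V] (G : SimpleGraph V) (hG : G.Connected)
    (R : Set (Sym2 V)) (hR : R ⊆ G.edgeSet) (k q ℓ : ℕ)
    (hq : q = ∑ c : (fromEdgeSet R).ConnectedComponent, (c.supp.ncard - 1))
    (hk : k ≤ q) (hℓ : ℓ = q - k)
    (hsum : ℓ ≤ ∑ c : (fromEdgeSet R).ConnectedComponent,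
      maxForestIn (G.edgeSet \ R) c.supp) :
    ∃ F : (fromEdgeSet R).ConnectedComponent → Set (Sym2 V),
      (∀ c, F c ⊆ G.edgeSet \ R) ∧
      (∀ c, ∀ e ∈ F c, ∀ v ∈ e, v ∈ c.supp) ∧
      (∀ c, (fromEdgeSet (F c)).IsAcyclic) ∧
      (∀ c, (F c).ncard ≤ maxForestIn (G.edgeSet \ R) c.supp) ∧
      (∑ c : (fromEdgeSet R).ConnectedComponent, (F c).ncard) = ℓ ∧
      ∃ T, IsSpanningTree G T ∧ (∀ c, F c ⊆ T.edgeSet) ∧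
        (T.edgeSet ∩ R).ncard = k := by
  -- Step 1: choose maximal forests in each component
  choose Fmax hFmaxB hFmaxS hFmaxA hFmaxC using fun c : (fromEdgeSet R).ConnectedComponent =>
    mymaxForestIn_spec (G.edgeSet \ R) c.supp
  -- Step 2: distribute ℓ among the components
  obtain ⟨f, hfle, hfsum⟩ := myexists_distribution Finset.univ
    (fun c : (fromEdgeSet R).ConnectedComponent => maxForestIn (G.edgeSet \ R) c.supp) ℓ hsum
  -- Step 3: shrink each maximal forest to the desired size
  choose F hFsub hFcard using fun c : (fromEdgeSet R).ConnectedComponent =>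
    Set.exists_subset_card_eq (s := Fmax c) (n := f c) (by rw [hFmaxC c]; exact hfle c)
  have hFB : ∀ c, F c ⊆ G.edgeSet \ R := fun c => (hFsub c).trans (hFmaxB c)
  have hFS : ∀ c, ∀ e ∈ F c, ∀ v ∈ e, v ∈ c.supp := fun c e he => hFmaxS c e (hFsub c he)
  have hFA : ∀ c, (fromEdgeSet (F c)).IsAcyclic := fun c =>
    myIsAcyclic_anti (fromEdgeSet_mono (hFsub c)) (hFmaxA c)
  have hFle : ∀ c, (F c).ncard ≤ maxForestIn (G.edgeSet \ R) c.supp := fun c => by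
    rw [hFcard c]; exact hfle c
  have hFsum' : (∑ c : (fromEdgeSet R).ConnectedComponent, (F c).ncard) = ℓ := by
    simp_rw [hFcard]; exact hfsum
  -- The union of the chosen forests
  have hUB : (⋃ c, F c) ⊆ G.edgeSet \ R := Set.iUnion_subset hFB
  have hUG : (⋃ c, F c) ⊆ G.edgeSet := hUB.trans Set.diff_subset
  have hUadj : ∀ a b, (fromEdgeSet (⋃ c, F c)).Adj a b →
      s(a, b) ∈ F ((fromEdgeSet R).connectedComponentMk a) ∧
      (fromEdgeSet R).connectedComponentMk a = (fromEdgeSet R).connectedComponentMk b := by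
    intro a b hab
    rw [fromEdgeSet_adj] at hab
    obtain ⟨hmem, hne⟩ := hab
    rw [Set.mem_iUnion] at hmem
    obtain ⟨c, hc⟩ := hmem
    have ha : a ∈ c.supp := hFS c _ hc a (Sym2.mem_mk_left a b)
    have hb : b ∈ c.supp := hFS c _ hc b (Sym2.mem_mk_right a b)
    rw [ConnectedComponent.mem_supp_iff] at ha hb
    exact ⟨by rw [ha]; exact hc, by rw [ha, hb]⟩
  have hH0A : (fromEdgeSet (⋃ c, F c)).IsAcyclic := by
    intro a w hw
    have key : ∀ {x y : V} (p : (fromEdgeSet (⋃ c, F c)).Walk x y), ∀ e ∈ p.edges,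
        e ∈ F ((fromEdgeSet R).connectedComponentMk x) := by
      intro x y p
      induction p with
      | nil => simp
      | @cons x z y h p ih =>
        intro e he
        rw [SimpleGraph.Walk.edges_cons, List.mem_cons] at he
        obtain ⟨h1, h2⟩ := hUadj x z h
        rcases he with rfl | he
        · exact h1
        · rw [h2]; exact ih e he
    have hsub : ∀ e ∈ w.edges,
        e ∈ (fromEdgeSet (F ((fromEdgeSet R).connectedComponentMk a))).edgeSet := by
      intro e he
      rw [edgeSet_fromEdgeSet]
      exact ⟨key w e he,
        fun hd => (fromEdgeSet (⋃ c, F c)).not_isDiag_of_mem_edgeSet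
          (w.edges_subset_edgeSet he) hd⟩
    exact hFA _ (w.transfer _ hsub) (hw.transfer hsub)
  -- the combined graph K
  have hKle : fromEdgeSet (R ∪ ⋃ c, F c) ≤ G := by
    have h := fromEdgeSet_mono (Set.union_subset hR hUG)
    rwa [fromEdgeSet_edgeSet] at h
  have hH0K : fromEdgeSet (⋃ c, F c) ≤ fromEdgeSet (R ∪ ⋃ c, F c) :=
    fromEdgeSet_mono Set.subset_union_right
  have hKcomp : ∀ a b, (fromEdgeSet (R ∪ ⋃ c, F c)).Adj a b →
      (fromEdgeSet R).connectedComponentMk a = (fromEdgeSet R).connectedComponentMk b := by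
    intro a b hab
    rw [fromEdgeSet_adj] at hab
    obtain ⟨hmem, hne⟩ := hab
    rcases hmem with hmem | hmem
    · exact ConnectedComponent.connectedComponentMk_eq_of_adj ((fromEdgeSet_adj _).2 ⟨hmem, hne⟩)
    · exact (hUadj a b ((fromEdgeSet_adj _).2 ⟨hmem, hne⟩)).2
  obtain ⟨T1, hT1H0, hT1K, hT1A, hT1r⟩ := myexists_maximal_acyclic hH0K hH0A
  obtain ⟨T, hTT1, hTG, hTA, hTr⟩ := myexists_maximal_acyclic (hT1K.trans hKle) hT1A
  have hT1comp : ∀ a b, T1.Adj a b →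
      (fromEdgeSet R).connectedComponentMk a = (fromEdgeSet R).connectedComponentMk b :=
    fun a b hab => hKcomp a b (hT1K hab)
  have hT1reach : ∀ a b, (fromEdgeSet R).Reachable a b → T1.Reachable a b := by
    intro a b hab
    exact hT1r a b (hab.mono (fromEdgeSet_mono Set.subset_union_left))
  have hTconn : T.Connected := by
    rw [connected_iff]
    exact ⟨fun u v => hTr u v (hG.preconnected u v), hG.nonempty⟩
  have hUT1 : (⋃ c, F c) ⊆ T1.edgeSet := by
    intro e he
    apply edgeSet_mono hT1H0
    rw [edgeSet_fromEdgeSet]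
    exact ⟨he, fun hd => G.not_isDiag_of_mem_edgeSet (hUG he) hd⟩
  have hFT : ∀ c, F c ⊆ T.edgeSet := fun c e he =>
    edgeSet_mono hTT1 (hUT1 (Set.mem_iUnion.2 ⟨c, he⟩))
  -- the red edges of T are exactly those of T1
  have hTR : T.edgeSet ∩ R = T1.edgeSet ∩ R := by
    apply Set.Subset.antisymm
    · intro e he
      induction e using Sym2.ind with
      | _ a b =>
        obtain ⟨heT, heR⟩ := he
        rw [mem_edgeSet] at heT
        refine ⟨?_, heR⟩
        by_contra hne1
        have hKadj : (fromEdgeSet (R ∪ ⋃ c, F c)).Adj a b :=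
          (fromEdgeSet_adj _).2 ⟨Or.inl heR, heT.ne⟩
        have hre : T1.Reachable a b := hT1r a b hKadj.reachable
        have hbr := (isAcyclic_iff_forall_adj_isBridge.mp hTA) heT
        rw [isBridge_iff] at hbr
        refine hbr (hre.mono ?_)
        intro x y hxy
        refine ⟨hTT1 hxy, ?_⟩
        intro hmem
        rw [fromEdgeSet_adj] at hmem
        exact hne1 (by rw [← Set.mem_singleton_iff.mp hmem.1]; exact hxy)
    · exact Set.inter_subset_inter_left R (edgeSet_mono hTT1)
  -- partition the edges of T1 by components
  have hEcard : ∀ c : (fromEdgeSet R).ConnectedComponent,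
      ({e ∈ T1.edgeSet | ∀ v ∈ e, v ∈ c.supp}).ncard = c.supp.ncard - 1 :=
    fun c => mycard_component_tree (fromEdgeSet R) T1 hT1comp hT1reach hT1A c
  have hcover : T1.edgeSet =
      ⋃ c ∈ (Finset.univ : Finset (fromEdgeSet R).ConnectedComponent),
        {e ∈ T1.edgeSet | ∀ v ∈ e, v ∈ c.supp} := by
    apply Set.Subset.antisymm
    · intro e he
      induction e using Sym2.ind with
      | _ a b =>
        have hT1adj : T1.Adj a b := he
        have hcc := hT1comp a b hT1adj
        refine Set.mem_biUnion (Finset.mem_univ ((fromEdgeSet R).connectedComponentMk a)) ?_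
        refine ⟨he, ?_⟩
        intro v hv
        rcases Sym2.mem_iff.mp hv with rfl | rfl
        · exact (ConnectedComponent.mem_supp_iff _ _).2 rfl
        · exact (ConnectedComponent.mem_supp_iff _ _).2 hcc.symm
    · intro e he
      rw [Set.mem_iUnion] at he
      obtain ⟨c, hc⟩ := he
      rw [Set.mem_iUnion] at hc
      obtain ⟨-, hc⟩ := hc
      exact hc.1
  have hdisjE : ∀ ci ∈ (Finset.univ : Finset (fromEdgeSet R).ConnectedComponent),
      ∀ cj ∈ (Finset.univ : Finset (fromEdgeSet R).ConnectedComponent), ci ≠ cj →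
      Disjoint {e ∈ T1.edgeSet | ∀ v ∈ e, v ∈ ci.supp}
        {e ∈ T1.edgeSet | ∀ v ∈ e, v ∈ cj.supp} := by
    rintro ci - cj - hne
    rw [Set.disjoint_left]
    intro e hei hej
    induction e using Sym2.ind with
    | _ a b =>
      have hai : a ∈ ci.supp := hei.2 a (Sym2.mem_mk_left a b)
      have haj : a ∈ cj.supp := hej.2 a (Sym2.mem_mk_left a b)
      rw [ConnectedComponent.mem_supp_iff] at hai haj
      exact hne (hai ▸ haj)
  have hT1card : T1.edgeSet.ncard = q := by
    rw [hcover, myncard_biUnion _ _ (fun c => Set.toFinite _) hdisjE, hq]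
    exact Finset.sum_congr rfl fun c _ => hEcard c
  have hdisjF : ∀ ci ∈ (Finset.univ : Finset (fromEdgeSet R).ConnectedComponent),
      ∀ cj ∈ (Finset.univ : Finset (fromEdgeSet R).ConnectedComponent), ci ≠ cj →
      Disjoint (F ci) (F cj) := by
    rintro ci - cj - hne
    rw [Set.disjoint_left]
    intro e hei hej
    induction e using Sym2.ind with
    | _ a b =>
      have hai : a ∈ ci.supp := hFS ci _ hei a (Sym2.mem_mk_left a b)
      have haj : a ∈ cj.supp := hFS cj _ hej a (Sym2.mem_mk_left a b)
      rw [ConnectedComponent.mem_supp_iff] at hai haj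
      exact hne (hai ▸ haj)
  have hUcard : (⋃ c, F c).ncard = ℓ := by
    have hrem : (⋃ c, F c) =
        ⋃ c ∈ (Finset.univ : Finset (fromEdgeSet R).ConnectedComponent), F c := by
      simp
    rw [hrem, myncard_biUnion _ _ (fun c => Set.toFinite _) hdisjF]
    exact hFsum'
  have hsplit : T1.edgeSet = (T1.edgeSet ∩ R) ∪ ⋃ c, F c := by
    apply Set.Subset.antisymm
    · intro e he
      have heK : e ∈ R ∪ ⋃ c, F c := by
        have h := edgeSet_mono hT1K he
        rw [edgeSet_fromEdgeSet] at h
        exact h.1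
      rcases heK with h | h
      · exact Or.inl ⟨he, h⟩
      · exact Or.inr h
    · rintro e (⟨he, -⟩ | he)
      · exact he
      · exact hUT1 he
  have hdisj2 : Disjoint (T1.edgeSet ∩ R) (⋃ c, F c) := by
    rw [Set.disjoint_left]
    rintro e ⟨-, heR⟩ heU
    exact (hUB heU).2 heR
  have hcount : ((T1.edgeSet ∩ R) ∪ ⋃ c, F c).ncard =
      (T1.edgeSet ∩ R).ncard + (⋃ c, F c).ncard :=
    Set.ncard_union_eq hdisj2 (Set.toFinite _) (Set.toFinite _)
  rw [← hsplit, hT1card, hUcard] at hcount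
  refine ⟨F, hFB, hFS, hFA, hFle, hFsum', T, ⟨hTG, hTconn, hTA⟩, hFT, ?_⟩
  rw [hTR]
  omega
end

section
/- If the red subgraph restricted to V_i is connected, then for any blue forest F inside V_i, there is a spanning tree of the subgraph induced on V_i containing F and using exactly |V_i| − 1 − |F| red edges. -/
open SimpleGraph

section Aux

variable {V : Type*}

/-- Adding an edge between two non-reachable vertices preserves acyclicity. -/
lemma aux_add_edge_acyclic {G : SimpleGraph V} (hG : G.IsAcyclic) {a b : V}
    (hab : ¬ G.Reachable a b) :
    (G ⊔ fromEdgeSet {s(a, b)}).IsAcyclic := by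
  intro u c hc
  by_cases he : s(a, b) ∈ c.edges
  · have h2 := adj_and_reachable_delete_edges_iff_exists_cycle.2 ⟨u, c, hc, he⟩
    exact hab (h2.2.mono (by rw [deleteEdges, sup_sdiff_right_self]; exact sdiff_le))
  · refine hG (c.transfer G (fun e he' => ?_)) (hc.transfer _)
    have h3 := c.edges_subset_edgeSet he'
    rw [edgeSet_sup, edgeSet_fromEdgeSet] at h3
    rcases h3 with h3 | h3
    · exact h3
    · exact absurd h3.1 (by rintro rfl; exact he he')

/-- Along a walk between two vertices not reachable in `H`, there is an edge whose
endpoints are not reachable in `H`. -/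
lemma aux_cross {H K : SimpleGraph V} {u v : V} (W : K.Walk u v)
    (hr : ¬ H.Reachable u v) : ∃ a b, K.Adj a b ∧ ¬ H.Reachable a b := by
  revert hr
  induction W with
  | nil => exact fun hr => absurd (Reachable.refl _) hr
  | @cons u x v h p ih =>
    intro hr
    by_cases hx : H.Reachable u x
    · exact ih (fun h2 => hr (hx.trans h2))
    · exact ⟨u, x, h, hx⟩

/-- A walk in `H` all of whose edges lie inside `S` induces reachability in the
induced graph on `S`. -/
lemma aux_walk_induce {H : SimpleGraph V} {S : Set V}
    (hE : ∀ e ∈ H.edgeSet, ∀ w ∈ e, w ∈ S) :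
    ∀ {u v : V} (_ : H.Walk u v) (hu : u ∈ S) (hv : v ∈ S),
      (H.induce S).Reachable ⟨u, hu⟩ ⟨v, hv⟩
  | _, _, SimpleGraph.Walk.nil, _, _ => Reachable.refl _
  | u, v, @SimpleGraph.Walk.cons _ _ _ x _ h p, hu, hv => by
    have hx : x ∈ S := hE s(u, x) (H.mem_edgeSet.2 h) x (Sym2.mem_mk_right u x)
    have hadj : (H.induce S).Adj ⟨u, hu⟩ ⟨x, hx⟩ := h
    exact hadj.reachable.trans (aux_walk_induce hE p hx hv)

/-- Counting edges of a spanning tree inside `S`. -/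
lemma aux_count [Fintype V] {S : Set V} {ET : Set (Sym2 V)}
    (hloop : ∀ e ∈ ET, ¬ e.IsDiag)
    (hin : ∀ e ∈ ET, ∀ w ∈ e, w ∈ S)
    (hacyc : (fromEdgeSet ET).IsAcyclic)
    (hconn : ∀ u ∈ S, ∀ v ∈ S, (fromEdgeSet ET).Reachable u v)
    (hS : S.Nonempty) : ET.ncard + 1 = S.ncard := by
  classical
  haveI : Fintype ↥S := S.toFinite.fintype
  set H : SimpleGraph V := fromEdgeSet ET with hH
  set T : SimpleGraph ↥S := H.induce S with hT
  have hEin : ∀ e ∈ H.edgeSet, ∀ w ∈ e, w ∈ S := by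
    intro e he w hw
    rw [hH, edgeSet_fromEdgeSet] at he
    exact hin e he.1 w hw
  have hTconn : T.Connected := by
    haveI : Nonempty ↥S := hS.to_subtype
    refine Connected.mk (fun a b => ?_)
    obtain ⟨W⟩ := hconn a a.2 b b.2
    have := aux_walk_induce hEin W a.2 b.2
    simpa using this
  have hTacyc : T.IsAcyclic := by
    intro u c hc
    exact hacyc ((c.map (SimpleGraph.Embedding.induce S).toHom))
      ((Walk.map_isCycle_iff_of_injective (Subtype.val_injective)).2 hc)
  have hTree : T.IsTree := ⟨hTconn, hTacyc⟩
  haveI : Fintype T.edgeSet := Set.Finite.fintype (Set.toFinite _)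
  have hcard := hTree.card_edgeFinset
  have himg : Sym2.map (Subtype.val) '' T.edgeSet = ET := by
    ext e
    constructor
    · rintro ⟨e', he', rfl⟩
      induction e' using Sym2.ind with
      | _ a b =>
        have : H.Adj a.1 b.1 := he'
        rw [hH, fromEdgeSet_adj] at this
        simpa using this.1
    · intro he
      induction e using Sym2.ind with
      | _ x y =>
        have hx : x ∈ S := hin _ he x (Sym2.mem_mk_left x y)
        have hy : y ∈ S := hin _ he y (Sym2.mem_mk_right x y)
        have hxy : x ≠ y := by
          intro hcontra
          exact hloop _ he (by simp [hcontra])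
        refine ⟨s(⟨x, hx⟩, ⟨y, hy⟩), ?_, by simp⟩
        show T.Adj ⟨x, hx⟩ ⟨y, hy⟩
        show H.Adj x y
        rw [hH, fromEdgeSet_adj]
        exact ⟨he, hxy⟩
  have h1 : ET.ncard = T.edgeFinset.card := by
    rw [← himg, Set.ncard_image_of_injective _ (Sym2.map.injective Subtype.val_injective)]
    rw [← Set.ncard_coe_finset, edgeFinset]
    simp
  have h2 : Fintype.card ↥S = S.ncard := by
    rw [← Nat.card_coe_set_eq, Nat.card_eq_fintype_card]
  omega

end Aux

theorem stmt_16 {V : Type*} [Fintype V] (G : SimpleGraph V)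
    (R : Set (Sym2 V)) (hR : R ⊆ G.edgeSet) (S : Set V)
    (hredconn : ∀ u ∈ S, ∀ v ∈ S,
      (fromEdgeSet {e ∈ R | ∀ w ∈ e, w ∈ S}).Reachable u v)
    (F : Set (Sym2 V)) (hFblue : F ⊆ G.edgeSet \ R)
    (hFin : ∀ e ∈ F, ∀ w ∈ e, w ∈ S)
    (hFacyclic : (fromEdgeSet F).IsAcyclic) :
    ∃ ET : Set (Sym2 V), ET ⊆ G.edgeSet ∧ (∀ e ∈ ET, ∀ w ∈ e, w ∈ S) ∧
      F ⊆ ET ∧ (fromEdgeSet ET).IsAcyclic ∧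
      (∀ u ∈ S, ∀ v ∈ S, (fromEdgeSet ET).Reachable u v) ∧
      (ET ∩ R).ncard = S.ncard - 1 - F.ncard := by
  classical
  set R' : Set (Sym2 V) := {e ∈ R | ∀ w ∈ e, w ∈ S} with hR'
  set 𝒜 : Set (Set (Sym2 V)) :=
    {A | F ⊆ A ∧ A ⊆ F ∪ R' ∧ (fromEdgeSet A).IsAcyclic} with h𝒜
  have hF𝒜 : F ∈ 𝒜 := ⟨subset_rfl, Set.subset_union_left, hFacyclic⟩
  obtain ⟨ET, hET, hmax⟩ :=
    Set.Finite.exists_maximalFor id 𝒜 (Set.toFinite _) ⟨F, hF𝒜⟩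
  obtain ⟨hFET, hETsub, hETacyc⟩ := hET
  have hETG : ET ⊆ G.edgeSet := by
    intro e he
    rcases hETsub he with h | h
    · exact (hFblue h).1
    · exact hR h.1
  have hETin : ∀ e ∈ ET, ∀ w ∈ e, w ∈ S := by
    intro e he
    rcases hETsub he with h | h
    · exact hFin e h
    · exact h.2
  have hreach : ∀ u ∈ S, ∀ v ∈ S, (fromEdgeSet ET).Reachable u v := by
    intro u hu v hv
    by_contra hr
    obtain ⟨W⟩ := hredconn u hu v hv
    obtain ⟨a, b, hadj, hnr⟩ := aux_cross W hr
    rw [fromEdgeSet_adj] at hadj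
    have heET : s(a, b) ∉ ET := by
      intro hmem
      exact hnr (SimpleGraph.Adj.reachable (by rw [fromEdgeSet_adj]; exact ⟨hmem, hadj.2⟩))
    have hnew : (insert s(a, b) ET) ∈ 𝒜 := by
      refine ⟨hFET.trans (Set.subset_insert _ _), ?_, ?_⟩
      · exact Set.insert_subset (Or.inr hadj.1) hETsub
      · have : fromEdgeSet (insert s(a, b) ET)
            = fromEdgeSet ET ⊔ fromEdgeSet {s(a, b)} := by
          rw [Set.insert_eq, Set.union_comm, fromEdgeSet_union]
        rw [this]
        exact aux_add_edge_acyclic hETacyc hnr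
    have := hmax hnew (Set.subset_insert _ _)
    simp only [id] at this
    exact heET (this (Set.mem_insert _ _))
  have hETR : ET ∩ R = ET \ F := by
    ext e
    constructor
    · rintro ⟨h1, h2⟩
      exact ⟨h1, fun hF => (hFblue hF).2 h2⟩
    · rintro ⟨h1, h2⟩
      rcases hETsub h1 with h | h
      · exact absurd h h2
      · exact ⟨h1, h.1⟩
  have hdiff : (ET \ F).ncard = ET.ncard - F.ncard :=
    Set.ncard_diff hFET (Set.toFinite _)
  refine ⟨ET, hETG, hETin, hFET, hETacyc, hreach, ?_⟩
  rcases Set.eq_empty_or_nonempty S with hS | hS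
  · have hET0 : ET = ∅ := by
      ext e
      simp only [Set.mem_empty_iff_false, iff_false]
      intro he
      induction e using Sym2.ind with
      | _ x y =>
        have := hETin _ he x (Sym2.mem_mk_left x y)
        rw [hS] at this
        exact this
    simp [hET0, hS]
  · have hcount := aux_count
      (fun e he => G.not_isDiag_of_mem_edgeSet (hETG he)) hETin hETacyc hreach hS
    have hFfin : F.ncard ≤ ET.ncard := Set.ncard_le_ncard hFET (Set.toFinite _)
    rw [hETR, hdiff]
    omega
end

section
/- The set of values k for which G possesses a spanning tree with exactly k red edges is an interval of integers: if G has spanning trees with exactly k_1 and exactly k_2 red edges with k_1 < k_2, then for every integer k with k_1 ≤ k ≤ k_2 there is a spanning tree with exactly k red edges. -/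
open SimpleGraph

private lemma connected_sdiff_of_reachable {V : Type*} {G : SimpleGraph V} (hG : G.Connected)
    {x y : V} (hr : (G \ fromEdgeSet {s(x, y)}).Reachable x y) :
    (G \ fromEdgeSet {s(x, y)}).Connected := by
  rw [connected_iff] at hG ⊢
  refine ⟨fun a b => ?_, hG.2⟩
  obtain ⟨w⟩ := hG.1 a b
  induction w with
  | nil => exact Reachable.refl _
  | @cons a c b h q ih =>
    refine Reachable.trans ?_ ih
    by_cases hec : s(a, c) = s(x, y)
    · rw [Sym2.eq_iff] at hec
      rcases hec with ⟨rfl, rfl⟩ | ⟨rfl, rfl⟩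
      · exact hr
      · exact hr.symm
    · exact Adj.reachable (by simp [sdiff_adj, fromEdgeSet_adj, hec, h])

private lemma exchange {V : Type*} {G T T₂ : SimpleGraph V}
    (hT : IsSpanningTree G T) (hT₂ : IsSpanningTree G T₂) {u v : V}
    (he2 : T₂.Adj u v) (heT : s(u, v) ∉ T.edgeSet) :
    ∃ f ∈ T.edgeSet, f ∉ T₂.edgeSet ∧
      ∃ T' : SimpleGraph V, IsSpanningTree G T' ∧
        T'.edgeSet = insert s(u, v) T.edgeSet \ {f} := by
  classical
  have hne : u ≠ v := he2.ne
  -- the unique path in T from u to v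
  obtain ⟨p₀, hp₀, hup⟩ := hT.2.existsUnique_path u v
  -- find an edge of p₀ not in T₂
  have hfex : ∃ f ∈ p₀.edges, f ∉ T₂.edgeSet := by
    by_contra hcon
    push_neg at hcon
    have hq : (p₀.transfer T₂ hcon).IsPath := hp₀.transfer hcon
    have h1 : p₀.transfer T₂ hcon = (SimpleGraph.Path.singleton he2 : T₂.Path u v).val := by
      have := (hT₂.2.existsUnique_path u v).unique hq (Path.singleton he2).property
      exact this
    have : s(u, v) ∈ (p₀.transfer T₂ hcon).edges := by
      rw [h1]; simp [Path.singleton]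
    rw [Walk.edges_transfer] at this
    exact heT (p₀.edges_subset_edgeSet this)
  obtain ⟨f, hfp, hfT₂⟩ := hfex
  obtain ⟨x, y, hfp, hfT₂⟩ : ∃ x y, s(x, y) ∈ p₀.edges ∧ s(x, y) ∉ T₂.edgeSet := by
    revert hfp hfT₂; induction f using Sym2.ind with
    | _ x y => exact fun h1 h2 => ⟨x, y, h1, h2⟩
  have hfT : s(x, y) ∈ T.edgeSet := p₀.edges_subset_edgeSet hfp
  set H : SimpleGraph V := T ⊔ fromEdgeSet {s(u, v)} with hH
  set T' : SimpleGraph V := H \ fromEdgeSet {s(x, y)} with hT'def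
  have hndiag : ¬ (s(u, v) : Sym2 V).IsDiag := by simpa using hne
  have hfndiag : ¬ (s(x, y) : Sym2 V).IsDiag := (T.not_isDiag_of_mem_edgeSet hfT)
  have hES : T'.edgeSet = insert s(u, v) T.edgeSet \ {s(x, y)} := by
    rw [hT'def, hH]
    rw [edgeSet_sdiff, edgeSet_sup, edgeSet_fromEdgeSet, edgeSet_fromEdgeSet]
    ext z
    simp only [Set.mem_diff, Set.mem_union, Set.mem_singleton_iff, Set.mem_insert_iff,
      Set.mem_setOf_eq]
    constructor
    · rintro ⟨h1 | ⟨rfl, -⟩, h2⟩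
      · exact ⟨Or.inr h1, fun hz => (h2 ⟨hz, by rwa [hz]⟩)⟩
      · exact ⟨Or.inl rfl, fun hz => (h2 ⟨hz, by rwa [hz]⟩)⟩
    · rintro ⟨h1 | h1, h2⟩
      · exact ⟨Or.inr ⟨h1, by rwa [h1]⟩, fun h => h2 h.1⟩
      · exact ⟨Or.inl h1, fun h => h2 h.1⟩
  have hTle : T ≤ H := le_sup_left
  have heH : H.Adj u v := by
    apply le_sup_right (b := fromEdgeSet {s(u, v)})
    rw [fromEdgeSet_adj]
    exact ⟨rfl, hne⟩
  have hHconn : H.Connected := hT.2.isConnected.mono hTle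
  -- a cycle in H through s(x,y)
  have hedges : ∀ e ∈ p₀.edges, e ∈ H.edgeSet :=
    fun e he => edgeSet_mono hTle (p₀.edges_subset_edgeSet he)
  have hpH : (p₀.transfer H hedges).IsPath := hp₀.transfer hedges
  have hcyc : (Walk.cons heH.symm (p₀.transfer H hedges)).IsCycle := by
    apply Path.cons_isCycle ⟨p₀.transfer H hedges, hpH⟩ heH.symm
    rw [Walk.edges_transfer]
    rw [Sym2.eq_swap]
    exact fun h => heT (p₀.edges_subset_edgeSet h)
  have hreach : (H \ fromEdgeSet {s(x, y)}).Reachable x y := by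
    have := (adj_and_reachable_delete_edges_iff_exists_cycle (G := H) (v := x) (w := y)).mpr
      ⟨v, Walk.cons heH.symm (p₀.transfer H hedges), hcyc, by
        rw [Walk.edges_cons, Walk.edges_transfer]; exact List.mem_cons_of_mem _ hfp⟩
    exact this.2
  have hT'conn : T'.Connected := connected_sdiff_of_reachable hHconn hreach
  have hT'leG : T' ≤ G := by
    refine le_trans sdiff_le (sup_le hT.1 ?_)
    intro a b hab
    rw [fromEdgeSet_adj, Set.mem_singleton_iff, Sym2.eq_iff] at hab
    rcases hab.1 with ⟨rfl, rfl⟩ | ⟨rfl, rfl⟩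
    · exact hT₂.1 he2
    · exact hT₂.1 he2.symm
  -- acyclicity
  have hT'acyc : T'.IsAcyclic := by
    intro w c hc
    by_cases heC : s(u, v) ∈ c.edges
    · -- get a path from u to v in T avoiding s(x,y)
      have := (adj_and_reachable_delete_edges_iff_exists_cycle (G := T') (v := u) (w := v)).mpr
        ⟨w, c, hc, heC⟩
      obtain ⟨q⟩ := this.2
      have hqe : ∀ e ∈ q.edges, e ∈ T.edgeSet := by
        intro e he
        have h1 := q.edges_subset_edgeSet he
        rw [edgeSet_deleteEdges, hES] at h1
        obtain ⟨⟨h2 | h2, h3⟩, h4⟩ := h1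
        · exact absurd h2 h4
        · exact h2
      have hqf : s(x, y) ∉ q.edges := by
        intro he
        have h1 := q.edges_subset_edgeSet he
        rw [edgeSet_deleteEdges, hES] at h1
        exact h1.1.2 rfl
      have heq : ((q.transfer T hqe).toPath : T.Walk u v) = p₀ :=
        hup _ (q.transfer T hqe).toPath.property
      have hmem : s(x, y) ∈ ((q.transfer T hqe).toPath : T.Walk u v).edges := heq ▸ hfp
      have hmem2 := Walk.edges_toPath_subset (q.transfer T hqe) hmem
      rw [Walk.edges_transfer] at hmem2
      exact hqf hmem2
    · -- transfer the cycle to T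
      have hce : ∀ e ∈ c.edges, e ∈ T.edgeSet := by
        intro e he
        have h1 := c.edges_subset_edgeSet he
        rw [hES] at h1
        rcases h1.1 with h2 | h2
        · exact absurd (h2 ▸ he) heC
        · exact h2
      exact hT.2.IsAcyclic (c.transfer T hce) (hc.transfer hce)
  exact ⟨s(x, y), hfT, hfT₂, T', ⟨hT'leG, ⟨hT'conn, hT'acyc⟩⟩, hES⟩

theorem stmt_17 {V : Type*} [Fintype V] (G : SimpleGraph V) (hG : G.Connected)
    (R : Set (Sym2 V)) (hR : R ⊆ G.edgeSet) (k₁ k₂ k : ℕ) (h12 : k₁ < k₂)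
    (T₁ : SimpleGraph V) (hT₁ : IsSpanningTree G T₁) (hk₁ : (T₁.edgeSet ∩ R).ncard = k₁)
    (T₂ : SimpleGraph V) (hT₂ : IsSpanningTree G T₂) (hk₂ : (T₂.edgeSet ∩ R).ncard = k₂)
    (hk : k₁ ≤ k ∧ k ≤ k₂) :
    ∃ T, IsSpanningTree G T ∧ (T.edgeSet ∩ R).ncard = k := by
  classical
  obtain ⟨hk1k, hkk2⟩ := hk
  suffices H : ∀ d : ℕ, ∀ T : SimpleGraph V, IsSpanningTree G T →
      (T.edgeSet ∩ R).ncard ≤ k → (T₂.edgeSet \ T.edgeSet).ncard = d →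
      ∃ T', IsSpanningTree G T' ∧ (T'.edgeSet ∩ R).ncard = k by
    exact H _ T₁ hT₁ (by omega) rfl
  intro d
  induction d using Nat.strong_induction_on with
  | _ d ih =>
    intro T hT hle hd
    rcases eq_or_lt_of_le hle with heq | hlt
    · exact ⟨T, hT, heq⟩
    -- count of T is < k ≤ k₂ = count of T₂, so T₂ has an edge not in T
    have key : ∀ (W : SimpleGraph V) [Fintype W.edgeSet], W.edgeSet.ncard = W.edgeFinset.card := by
      intro W inst
      rw [edgeFinset_card, ← Nat.card_eq_fintype_card, Nat.card_coe_set_eq]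
    have hcards : T.edgeSet.ncard = T₂.edgeSet.ncard := by
      haveI : Fintype T.edgeSet := Fintype.ofFinite _
      haveI : Fintype T₂.edgeSet := Fintype.ofFinite _
      have h1 := hT.2.card_edgeFinset
      have h2 := hT₂.2.card_edgeFinset
      rw [key T, key T₂]
      omega
    have hne : (T₂.edgeSet \ T.edgeSet).Nonempty := by
      by_contra hcon
      rw [Set.not_nonempty_iff_eq_empty, Set.diff_eq_empty] at hcon
      have : T₂.edgeSet = T.edgeSet :=
        Set.eq_of_subset_of_ncard_le hcon (le_of_eq hcards) (Set.toFinite _)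
      rw [this] at hk₂
      omega
    obtain ⟨e, he2, heT⟩ := hne
    obtain ⟨u, v, he2, heT⟩ : ∃ u v, s(u, v) ∈ T₂.edgeSet ∧ s(u, v) ∉ T.edgeSet := by
      revert he2 heT; induction e using Sym2.ind with
      | _ u v => exact fun h1 h2 => ⟨u, v, h1, h2⟩
    obtain ⟨f, hfT, hfT₂, T', hT'span, hT'edges⟩ := exchange hT hT₂ he2 heT
    -- new red count is at most k
    have hcount : (T'.edgeSet ∩ R).ncard ≤ k := by
      have hsub : T'.edgeSet ∩ R ⊆ insert s(u, v) (T.edgeSet ∩ R) := by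
        rw [hT'edges]
        rintro z ⟨⟨hz1 | hz1, -⟩, hz2⟩
        · exact Or.inl hz1
        · exact Or.inr ⟨hz1, hz2⟩
      calc (T'.edgeSet ∩ R).ncard ≤ (insert s(u, v) (T.edgeSet ∩ R)).ncard :=
            Set.ncard_le_ncard hsub (Set.toFinite _)
        _ ≤ (T.edgeSet ∩ R).ncard + 1 := Set.ncard_insert_le _ _
        _ ≤ k := by omega
    -- the measure decreases
    have hdiff : T₂.edgeSet \ T'.edgeSet = (T₂.edgeSet \ T.edgeSet) \ {s(u, v)} := by
      ext z
      rw [hT'edges]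
      simp only [Set.mem_diff, Set.mem_insert_iff, Set.mem_singleton_iff]
      have hzf : z = f → z ∉ T₂.edgeSet := by rintro rfl; exact hfT₂
      tauto
    have hdpos : 0 < d := by
      rw [← hd]
      have hne2 : (T₂.edgeSet \ T.edgeSet).Nonempty := ⟨s(u, v), he2, heT⟩
      exact (Set.ncard_pos (hs := Set.toFinite _)).mpr hne2
    have hnewd : (T₂.edgeSet \ T'.edgeSet).ncard = d - 1 := by
      rw [hdiff, Set.ncard_diff_singleton_of_mem (show s(u, v) ∈ T₂.edgeSet \ T.edgeSet from ⟨he2, heT⟩), hd]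
    exact ih (d - 1) (by omega) T' hT'span hcount hnewd
end
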